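/- arXiv:2109.01555 — 5 statements merged into one kernel-verified Lean document; each statement's English description precedes it below -/
import Mathlib

section
/- In a topological space, if U and V are open sets with U ∪ V ⊆ closure(U ∩ V), and W is any open set, then (U ∪ W) ∪ (V ∪ W) ⊆ closure((U ∪ W) ∩ (V ∪ W)). -/
/-- In a topological space, the density relation `U ρ V ↔ U ∪ V ⊆ closure (U ∩ V)`
on open sets is compatible with union by a fixed open set `W`. -/
theorem stmt8 {X : Type*} [TopologicalSpace X] {U V W : Set X}
    (hU : IsOpen U) (hV : IsOpen V) (hW : IsOpen W)
    (h : U ∪ V ⊆ closure (U ∩ V)) :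
    (U ∪ W) ∪ (V ∪ W) ⊆ closure ((U ∪ W) ∩ (V ∪ W)) := by
  have heq : (U ∪ W) ∩ (V ∪ W) = (U ∩ V) ∪ W := by
    ext x; simp [Set.mem_inter_iff, Set.mem_union]; tauto
  rw [heq]
  intro x hx
  rcases hx with (hx | hx) | (hx | hx)
  · exact closure_mono Set.subset_union_left (h (Or.inl hx))
  · exact subset_closure (Or.inr hx)
  · exact closure_mono Set.subset_union_left (h (Or.inr hx))
  · exact subset_closure (Or.inr hx)
end

section
/- Let G be an ample groupoid and S an additively idempotent commutative semiring. For any compact open subsets U, V of G, the convolution of their characteristic functions satisfies 1_U * 1_V = 1_{UV}, where UV = {αβ : α ∈ U, β ∈ V, s(α) = r(β)}. -/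
/-- An ample groupoid: a topological groupoid (partially defined continuous
composition, continuous inversion), which is étale (source and range are local
homeomorphisms), whose unit space is locally compact Hausdorff and totally
disconnected, and which has a base of compact open bisections. -/
structure AmpleGroupoid (G : Type*) [TopologicalSpace G] where
  src : G → G
  rng : G → G
  inv : G → G
  comp : (a b : G) → src a = rng b → G
  src_comp : ∀ a b h, src (comp a b h) = src b
  rng_comp : ∀ a b h, rng (comp a b h) = rng a
  src_src : ∀ a, src (src a) = src a
  rng_src : ∀ a, rng (src a) = src a
  src_rng : ∀ a, src (rng a) = rng a
  rng_rng : ∀ a, rng (rng a) = rng a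
  comp_assoc : ∀ a b c h1 h2 h3 h4,
    comp (comp a b h1) c h2 = comp a (comp b c h3) h4
  unit_comp : ∀ a b (h : src a = rng b), rng a = a → comp a b h = b
  comp_unit : ∀ a b (h : src a = rng b), src b = b → comp a b h = a
  src_inv : ∀ a, src (inv a) = rng a
  rng_inv : ∀ a, rng (inv a) = src a
  comp_inv : ∀ a (h : src a = rng (inv a)), comp a (inv a) h = rng a
  inv_comp : ∀ a (h : src (inv a) = rng a), comp (inv a) a h = src a
  continuous_inv : Continuous inv
  continuous_comp :
    Continuous fun p : {q : G × G // src q.1 = rng q.2} => comp p.1.1 p.1.2 p.2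
  etale_src : IsLocalHomeomorph src
  etale_rng : IsLocalHomeomorph rng
  t2_units : T2Space {x : G // src x = x}
  locallyCompact_units : LocallyCompactSpace {x : G // src x = x}
  totallyDisconnected_units : TotallyDisconnectedSpace {x : G // src x = x}
  base : TopologicalSpace.IsTopologicalBasis
    {U : Set G | IsCompact U ∧ IsOpen U ∧ Set.InjOn src U ∧ Set.InjOn rng U}

namespace AmpleGroupoid

variable {G : Type*} [TopologicalSpace G] (gd : AmpleGroupoid G)

/-- The set product `UV` of two subsets of the groupoid: all composable products. -/
def setProd (U V : Set G) : Set G :=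
  {x | ∃ a ∈ U, ∃ b ∈ V, ∃ h : gd.src a = gd.rng b, gd.comp a b h = x}

/-- The unit space `G⁰`. -/
def units : Set G := {x | gd.src x = x}

/-- A bisection: a subset on which both source and range are injective. -/
def IsBisection (U : Set G) : Prop := Set.InjOn gd.src U ∧ Set.InjOn gd.rng U

/-- The set of units with trivial isotropy group. -/
def trivIso : Set G :=
  {u | gd.src u = u ∧ ∀ γ : G, gd.src γ = u → gd.rng γ = u → γ = u}

/-- Minimality: no nontrivial (relatively) open invariant subsets of the unit space. -/
def Minimal : Prop :=
  ∀ D : Set G, (∃ O : Set G, IsOpen O ∧ D = O ∩ gd.units) →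
    (∀ a : G, gd.src a ∈ D → gd.rng a ∈ D) → D = ∅ ∨ D = gd.units

/-- Effectiveness: the interior of the isotropy subgroupoid is the unit space. -/
def Effective : Prop := interior {x : G | gd.src x = gd.rng x} = gd.units

/-- A compact open subset. -/
def CO (U : Set G) : Prop := IsCompact U ∧ IsOpen U

end AmpleGroupoid

open AmpleGroupoid

/-- In an ample groupoid `G` with coefficients in an additively idempotent
commutative semiring `S`, for compact open subsets `U, V ⊆ G` the convolution
`1_U * 1_V` equals `1_{UV}`: at each `γ ∈ G`, the convolution sum
`∑ f(α)g(β)` over the (finitely many) factorizations `γ = αβ` with `α ∈ U`,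
`β ∈ V`, `s(α) = r(β)` — a sum of `1`s indexed by the finite set `P` of such
pairs — equals the characteristic function of `UV` at `γ`. -/
theorem stmt10 {G : Type*} [TopologicalSpace G] (gd : AmpleGroupoid G)
    {S : Type*} [CommSemiring S] (hidem : ∀ s : S, s + s = s)
    (U V : Set G) (hUc : IsCompact U) (hUo : IsOpen U)
    (hVc : IsCompact V) (hVo : IsOpen V) (γ : G)
    (P : Finset (G × G))
    (hP : ∀ p : G × G, p ∈ P ↔ p.1 ∈ U ∧ p.2 ∈ V ∧
      ∃ h : gd.src p.1 = gd.rng p.2, gd.comp p.1 p.2 h = γ) :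
    (∑ _p ∈ P, (1 : S) * (1 : S)) =
      Set.indicator (gd.setProd U V) (fun _ => (1 : S)) γ := by
  have key : ∀ Q : Finset (G × G), Q.Nonempty → (∑ _p ∈ Q, (1 : S)) = 1 := by
    intro Q hQ
    induction Q using Finset.cons_induction with
    | empty => exact absurd hQ (by simp)
    | cons a s ha ih =>
      rw [Finset.sum_cons]
      rcases s.eq_empty_or_nonempty with h | h
      · simp [h]
      · rw [ih h, hidem 1]
  simp only [one_mul]
  by_cases hγ : γ ∈ gd.setProd U V
  · rw [Set.indicator_of_mem hγ]
    obtain ⟨a, ha, b, hb, h, hc⟩ := hγ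
    exact key P ⟨(a, b), (hP (a, b)).2 ⟨ha, hb, h, hc⟩⟩
  · rw [Set.indicator_of_notMem hγ]
    have : P = ∅ := by
      rw [Finset.eq_empty_iff_forall_notMem]
      intro p hp
      obtain ⟨h1, h2, h3, h4⟩ := (hP p).1 hp
      exact hγ ⟨p.1, h1, p.2, h2, h3, h4⟩
    simp [this]
end

section
/- Let G be an ample groupoid with a base of compact open bisections. If U, V, W are compact open subsets of G, W is a bisection, and U ∪ V ⊆ closure(U ∩ V), then UW ∪ VW ⊆ closure(UW ∩ VW), where products denote the set of composable products. -/
open AmpleGroupoid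

/-- Let `G` be an ample groupoid (so with a base of compact open bisections).
If `U`, `V`, `W` are compact open subsets of `G`, `W` is a bisection, and
`U ∪ V ⊆ closure (U ∩ V)`, then `UW ∪ VW ⊆ closure (UW ∩ VW)`, where the
products are sets of composable products. -/
theorem stmt15 {G : Type*} [TopologicalSpace G] (gd : AmpleGroupoid G)
    (U V W : Set G) (hUc : IsCompact U) (hUo : IsOpen U)
    (hVc : IsCompact V) (hVo : IsOpen V)
    (hWc : IsCompact W) (hWo : IsOpen W) (hWb : gd.IsBisection W)
    (h : U ∪ V ⊆ closure (U ∩ V)) :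
    gd.setProd U W ∪ gd.setProd V W ⊆
      closure (gd.setProd U W ∩ gd.setProd V W) := by
  have key : ∀ a ∈ U ∪ V, ∀ b ∈ W, ∀ hc : gd.src a = gd.rng b,
      gd.comp a b hc ∈ closure (gd.setProd U W ∩ gd.setProd V W) := by
    intro a ha b hb hc
    rw [mem_closure_iff]
    intro N hN hxN
    -- use continuity of composition at ⟨(a,b), hc⟩
    set f : {q : G × G // gd.src q.1 = gd.rng q.2} → G :=
      fun p => gd.comp p.1.1 p.1.2 p.2 with hf
    have hcont : IsOpen (f ⁻¹' N) := gd.continuous_comp.isOpen_preimage N hN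
    rw [isOpen_induced_iff] at hcont
    obtain ⟨T, hT, hTeq⟩ := hcont
    have hpT : ((a, b) : G × G) ∈ T := by
      have : (⟨(a, b), hc⟩ : {q : G × G // gd.src q.1 = gd.rng q.2}) ∈ f ⁻¹' N := hxN
      rw [← hTeq] at this
      exact this
    obtain ⟨O1, O2, hO1, hO2, haO1, hbO2, hsub⟩ := isOpen_prod_iff.mp hT a b hpT
    -- range is an open map
    have hR : IsOpen (gd.rng '' (W ∩ O2)) :=
      gd.etale_rng.isOpenMap _ (hWo.inter hO2)
    have hsrc_cont : Continuous gd.src := gd.etale_src.continuous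
    have hM : IsOpen (O1 ∩ gd.src ⁻¹' (gd.rng '' (W ∩ O2))) :=
      hO1.inter (hsrc_cont.isOpen_preimage _ hR)
    have haM : a ∈ O1 ∩ gd.src ⁻¹' (gd.rng '' (W ∩ O2)) :=
      ⟨haO1, ⟨b, ⟨hb, hbO2⟩, hc.symm⟩⟩
    have haCl : a ∈ closure (U ∩ V) := h ha
    rw [mem_closure_iff] at haCl
    obtain ⟨a', ⟨ha'O1, ha'src⟩, ha'U, ha'V⟩ := haCl _ hM haM
    obtain ⟨b', ⟨hb'W, hb'O2⟩, hb'rng⟩ := ha'src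
    have hc' : gd.src a' = gd.rng b' := hb'rng.symm
    refine ⟨gd.comp a' b' hc', ?_, ?_, ?_⟩
    · have : (⟨(a', b'), hc'⟩ : {q : G × G // gd.src q.1 = gd.rng q.2}) ∈ f ⁻¹' N := by
        rw [← hTeq]
        exact hsub ⟨ha'O1, hb'O2⟩
      exact this
    · exact ⟨a', ha'U, b', hb'W, hc', rfl⟩
    · exact ⟨a', ha'V, b', hb'W, hc', rfl⟩
  rintro x (⟨a, ha, b, hb, hc, rfl⟩ | ⟨a, ha, b, hb, hc, rfl⟩)
  · exact key a (Or.inl ha) b hb hc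
  · exact key a (Or.inr ha) b hb hc
end

section
/- Let G be a second-countable ample groupoid that is minimal and effective, and in which every compact open subset is regular open. Then the Steinberg algebra A_B(G) over the Boolean semifield B is congruence-simple. -/
open AmpleGroupoid

-- AUX START
namespace AmpleGroupoid

variable {G : Type*} [TopologicalSpace G] (gd : AmpleGroupoid G)

/-! ### Algebraic lemmas -/

lemma src_mem_units (a : G) : gd.src a ∈ gd.units := gd.src_src a

lemma rng_mem_units (a : G) : gd.rng a ∈ gd.units := gd.src_rng a

lemma unit_rng {u : G} (hu : u ∈ gd.units) : gd.rng u = u := by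
  have h : gd.src u = u := hu
  calc gd.rng u = gd.rng (gd.src u) := by rw [h]
  _ = gd.src u := gd.rng_src u
  _ = u := h

lemma comp_congr_left {a a' b : G} (ha : a = a') (h : gd.src a = gd.rng b) :
    gd.comp a b h = gd.comp a' b (ha ▸ h) := by subst ha; rfl

lemma comp_congr_right {a b b' : G} (hb : b = b') (h : gd.src a = gd.rng b) :
    gd.comp a b h = gd.comp a b' (hb ▸ h) := by subst hb; rfl

/-- `d⁻¹ (d u) = u` -/
lemma inv_comp_comp (d u : G) (h : gd.src d = gd.rng u)
    (h2 : gd.src (gd.inv d) = gd.rng (gd.comp d u h)) :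
    gd.comp (gd.inv d) (gd.comp d u h) h2 = u := by
  have h1 : gd.src (gd.inv d) = gd.rng d := gd.src_inv d
  have h3 : gd.src (gd.comp (gd.inv d) d h1) = gd.rng u := by
    rw [gd.src_comp]; exact h
  have := (gd.comp_assoc (gd.inv d) d u h1 h3 h h2).symm
  rw [this, gd.comp_congr_left (gd.inv_comp d h1) h3,
    gd.unit_comp _ u _ (by rw [gd.rng_src])]

/-- `(y d) d⁻¹ = y` -/
lemma comp_comp_inv (y d : G) (h : gd.src y = gd.rng d)
    (h2 : gd.src (gd.comp y d h) = gd.rng (gd.inv d)) :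
    gd.comp (gd.comp y d h) (gd.inv d) h2 = y := by
  have h1 : gd.src d = gd.rng (gd.inv d) := by rw [gd.rng_inv]
  have h4 : gd.src y = gd.rng (gd.comp d (gd.inv d) h1) := by
    rw [gd.rng_comp]; exact h
  have := gd.comp_assoc y d (gd.inv d) h h2 h1 h4
  rw [this, gd.comp_congr_right (gd.comp_inv d h1) h4,
    gd.comp_unit y (gd.rng d) _ (by rw [gd.src_rng])]

/-- `d (d⁻¹ y) = y` -/
lemma comp_inv_comp (d y : G) (h : gd.src (gd.inv d) = gd.rng y)
    (h2 : gd.src d = gd.rng (gd.comp (gd.inv d) y h)) :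
    gd.comp d (gd.comp (gd.inv d) y h) h2 = y := by
  have h1 : gd.src d = gd.rng (gd.inv d) := by rw [gd.rng_inv]
  have h3 : gd.src (gd.comp d (gd.inv d) h1) = gd.rng y := by
    rw [gd.src_comp]; exact h
  have := (gd.comp_assoc d (gd.inv d) y h1 h3 h h2).symm
  rw [this, gd.comp_congr_left (gd.comp_inv d h1) h3,
    gd.unit_comp _ y _ (by rw [gd.rng_rng])]

lemma inv_unique {a b : G} (h : gd.src a = gd.rng b) (hc : gd.comp a b h = gd.rng a) :
    b = gd.inv a := by
  have h1 : gd.src (gd.inv a) = gd.rng a := gd.src_inv a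
  have h3 : gd.src (gd.comp (gd.inv a) a h1) = gd.rng b := by rw [gd.src_comp]; exact h
  have h4 : gd.src (gd.inv a) = gd.rng (gd.comp a b h) := by rw [gd.rng_comp]; exact h1
  have e1 : gd.comp (gd.comp (gd.inv a) a h1) b h3 = gd.comp (gd.inv a) (gd.comp a b h) h4 :=
    gd.comp_assoc _ _ _ _ _ h _
  have e2 : gd.comp (gd.comp (gd.inv a) a h1) b h3 = b := by
    rw [gd.comp_congr_left (gd.inv_comp a h1) h3,
      gd.unit_comp _ b _ (by rw [gd.rng_src])]
  have e3 : gd.comp (gd.inv a) (gd.comp a b h) h4 = gd.inv a := by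
    rw [gd.comp_congr_right hc h4,
      gd.comp_unit _ _ _ (by rw [gd.src_rng])]
  rw [← e2, e1, e3]

lemma inv_inv (a : G) : gd.inv (gd.inv a) = a := by
  have h : gd.src (gd.inv a) = gd.rng a := gd.src_inv a
  exact (gd.inv_unique h (by rw [gd.inv_comp a h, gd.rng_inv])).symm

/-! ### setProd lemmas -/

lemma comp_mem_setProd {U V : Set G} {a b : G} (ha : a ∈ U) (hb : b ∈ V)
    (h : gd.src a = gd.rng b) : gd.comp a b h ∈ gd.setProd U V :=
  ⟨a, ha, b, hb, h, rfl⟩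

lemma setProd_empty_left (V : Set G) : gd.setProd ∅ V = ∅ := by
  ext x; simp [setProd]

lemma setProd_empty_right (U : Set G) : gd.setProd U ∅ = ∅ := by
  ext x; simp [setProd]

lemma setProd_sUnion_left (F : Set (Set G)) (V : Set G) :
    gd.setProd (⋃₀ F) V = ⋃ S ∈ F, gd.setProd S V := by
  ext x; constructor
  · rintro ⟨a, ⟨S, hS, ha⟩, b, hb, h, rfl⟩
    exact Set.mem_biUnion hS ⟨a, ha, b, hb, h, rfl⟩
  · rintro hx
    obtain ⟨S, hS, a, ha, b, hb, h, rfl⟩ := by simpa using hx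
    exact ⟨a, ⟨S, hS, ha⟩, b, hb, h, rfl⟩

lemma setProd_unit_left {N : Set G} (hN : N ⊆ gd.units) (U : Set G) :
    gd.setProd N U = U ∩ gd.rng ⁻¹' N := by
  ext x; constructor
  · rintro ⟨n, hn, u, hu, h, rfl⟩
    have hns : gd.src n = n := hN hn
    have hval : gd.comp n u h = u := gd.unit_comp n u h (gd.unit_rng (hN hn))
    rw [hval]
    refine ⟨hu, ?_⟩
    have : gd.rng u = n := by rw [← h, hns]
    rw [Set.mem_preimage, this]; exact hn
  · rintro ⟨hu, hru⟩
    refine ⟨gd.rng x, hru, x, hu, gd.src_rng x, ?_⟩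
    exact gd.unit_comp _ x _ (gd.rng_rng x)

lemma setProd_unit_right {N : Set G} (hN : N ⊆ gd.units) (U : Set G) :
    gd.setProd U N = U ∩ gd.src ⁻¹' N := by
  ext x; constructor
  · rintro ⟨u, hu, n, hn, h, rfl⟩
    have hns : gd.src n = n := hN hn
    have hval : gd.comp u n h = u := gd.comp_unit u n h hns
    rw [hval]
    refine ⟨hu, ?_⟩
    have : gd.src u = n := by rw [h, gd.unit_rng (hN hn)]
    rw [Set.mem_preimage, this]; exact hn
  · rintro ⟨hu, hsu⟩
    refine ⟨x, hu, gd.src x, hsu, (gd.rng_src x).symm, ?_⟩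
    exact gd.comp_unit x _ _ (gd.src_src x)

lemma isBisection_inv {D : Set G} (hD : gd.IsBisection D) :
    gd.IsBisection (gd.inv '' D) := by
  constructor
  · rintro _ ⟨d, hd, rfl⟩ _ ⟨d', hd', rfl⟩ h
    rw [gd.src_inv, gd.src_inv] at h
    rw [hD.2 hd hd' h]
  · rintro _ ⟨d, hd, rfl⟩ _ ⟨d', hd', rfl⟩ h
    rw [gd.rng_inv, gd.rng_inv] at h
    rw [hD.1 hd hd' h]

/-! ### Topological lemmas -/

lemma continuous_src : Continuous gd.src := gd.etale_src.continuous
lemma continuous_rng : Continuous gd.rng := gd.etale_rng.continuous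
lemma isOpenMap_src : IsOpenMap gd.src := gd.etale_src.isOpenMap
lemma isOpenMap_rng : IsOpenMap gd.rng := gd.etale_rng.isOpenMap

lemma units_isOpen (heff : gd.Effective) : IsOpen gd.units := by
  rw [← heff]; exact isOpen_interior

lemma inv_image_eq_preimage (U : Set G) : gd.inv '' U = gd.inv ⁻¹' U := by
  ext x; constructor
  · rintro ⟨u, hu, rfl⟩; rwa [Set.mem_preimage, gd.inv_inv]
  · intro hx; exact ⟨gd.inv x, hx, gd.inv_inv x⟩

lemma isOpen_inv_image {U : Set G} (hU : IsOpen U) : IsOpen (gd.inv '' U) := by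
  rw [gd.inv_image_eq_preimage]; exact hU.preimage gd.continuous_inv

lemma isClosed_composable : IsClosed {q : G × G | gd.src q.1 = gd.rng q.2} := by
  haveI := gd.t2_units
  have hcont : Continuous fun q : G × G =>
      ((⟨gd.src q.1, gd.src_src q.1⟩ : {x : G // gd.src x = x}),
        (⟨gd.rng q.2, gd.src_rng q.2⟩ : {x : G // gd.src x = x})) := by
    exact Continuous.prodMk
      (Continuous.subtype_mk (gd.continuous_src.comp continuous_fst) _)
      (Continuous.subtype_mk (gd.continuous_rng.comp continuous_snd) _)
  have : {q : G × G | gd.src q.1 = gd.rng q.2} =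
      (fun q : G × G =>
        ((⟨gd.src q.1, gd.src_src q.1⟩ : {x : G // gd.src x = x}),
          (⟨gd.rng q.2, gd.src_rng q.2⟩ : {x : G // gd.src x = x}))) ⁻¹'
        (Set.diagonal {x : G // gd.src x = x}) := by
    ext q
    simp only [Set.mem_setOf_eq, Set.mem_preimage, Set.mem_diagonal_iff, Subtype.mk.injEq]
  rw [this]
  exact isClosed_diagonal.preimage hcont

lemma setProd_eq_image (U V : Set G) :
    gd.setProd U V =
      (fun p : {q : G × G // gd.src q.1 = gd.rng q.2} => gd.comp p.1.1 p.1.2 p.2) ''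
        (Subtype.val ⁻¹' (U ×ˢ V)) := by
  ext x; constructor
  · rintro ⟨a, ha, b, hb, h, rfl⟩
    exact ⟨⟨(a, b), h⟩, ⟨ha, hb⟩, rfl⟩
  · rintro ⟨⟨⟨a, b⟩, h⟩, ⟨ha, hb⟩, rfl⟩
    exact ⟨a, ha, b, hb, h, rfl⟩

lemma isCompact_setProd {U V : Set G} (hU : IsCompact U) (hV : IsCompact V) :
    IsCompact (gd.setProd U V) := by
  rw [gd.setProd_eq_image]
  apply IsCompact.image _ gd.continuous_comp
  rw [Topology.IsEmbedding.subtypeVal.isCompact_iff]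
  have : Subtype.val '' (Subtype.val ⁻¹' (U ×ˢ V) :
      Set {q : G × G // gd.src q.1 = gd.rng q.2}) =
      (U ×ˢ V) ∩ {q : G × G | gd.src q.1 = gd.rng q.2} := by
    rw [Set.image_preimage_eq_inter_range, Subtype.range_coe_subtype]
  rw [this]
  exact (hU.prod hV).inter_right gd.isClosed_composable

lemma isOpen_setProd_left {D U : Set G} (hDo : IsOpen D) (hDb : gd.IsBisection D)
    (hUo : IsOpen U) : IsOpen (gd.setProd D U) := by
  classical
  set R : Set G := gd.rng ⁻¹' (gd.rng '' D) with hRdef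
  have hRo : IsOpen R := (gd.isOpenMap_rng D hDo).preimage gd.continuous_rng
  have hsel : ∀ y : R, ∃ d, d ∈ D ∧ gd.rng d = gd.rng (y : G) := by
    rintro ⟨y, d, hd, hdy⟩; exact ⟨d, hd, hdy⟩
  choose δ hδD hδr using hsel
  have hδcont : Continuous δ := by
    rw [continuous_def]
    intro V hV
    have heq : δ ⁻¹' V = Subtype.val ⁻¹' (gd.rng ⁻¹' (gd.rng '' (V ∩ D))) := by
      ext y
      simp only [Set.mem_preimage]
      constructor
      · intro hyV
        exact ⟨δ y, ⟨hyV, hδD y⟩, hδr y⟩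
      · rintro ⟨d, ⟨hdV, hdD⟩, hdr⟩
        have : d = δ y := hDb.2 hdD (hδD y) (by rw [hdr, hδr])
        exact this ▸ hdV
    rw [heq]
    exact (((gd.isOpenMap_rng _ (hV.inter hDo)).preimage
      gd.continuous_rng)).preimage continuous_subtype_val
  have hcomp' : ∀ y : R, gd.src (gd.inv (δ y)) = gd.rng (y : G) := fun y => by
    rw [gd.src_inv, hδr]
  set g : R → G := fun y => gd.comp (gd.inv (δ y)) y (hcomp' y) with hgdef
  have hgcont : Continuous g := by
    have hmk : Continuous fun y : R =>
        (⟨(gd.inv (δ y), (y : G)), hcomp' y⟩ : {q : G × G // gd.src q.1 = gd.rng q.2}) :=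
      Continuous.subtype_mk
        ((gd.continuous_inv.comp hδcont).prodMk continuous_subtype_val) _
    exact gd.continuous_comp.comp hmk
  have key : gd.setProd D U = Subtype.val '' (g ⁻¹' U) := by
    ext y; constructor
    · rintro ⟨d, hd, u, hu, h, rfl⟩
      have hyR : gd.comp d u h ∈ R := ⟨d, hd, (gd.rng_comp d u h).symm⟩
      refine ⟨⟨_, hyR⟩, ?_, rfl⟩
      have hδ : δ ⟨_, hyR⟩ = d :=
        hDb.2 (hδD _) hd (by rw [hδr]; exact gd.rng_comp d u h)
      show g ⟨_, hyR⟩ ∈ U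
      have hval : g ⟨_, hyR⟩ = u := by
        show gd.comp (gd.inv (δ ⟨_, hyR⟩)) (gd.comp d u h) (hcomp' ⟨_, hyR⟩) = u
        rw [gd.comp_congr_left (congrArg gd.inv hδ) (hcomp' _)]
        exact gd.inv_comp_comp d u h _
      rw [hval]; exact hu
    · rintro ⟨y', hyU, rfl⟩
      have h1 : gd.src (δ y') = gd.rng (g y') := by
        show gd.src (δ y') = gd.rng (gd.comp (gd.inv (δ y')) _ (hcomp' y'))
        rw [gd.rng_comp, gd.rng_inv]
      refine ⟨δ y', hδD y', g y', hyU, h1, ?_⟩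
      exact gd.comp_inv_comp (δ y') (y' : G) (hcomp' y') h1
  rw [key]
  exact hRo.isOpenMap_subtype_val _ (hUo.preimage hgcont)

lemma isOpen_setProd_right {U D : Set G} (hUo : IsOpen U) (hDo : IsOpen D)
    (hDb : gd.IsBisection D) : IsOpen (gd.setProd U D) := by
  classical
  set R : Set G := gd.src ⁻¹' (gd.src '' D) with hRdef
  have hRo : IsOpen R := (gd.isOpenMap_src D hDo).preimage gd.continuous_src
  have hsel : ∀ y : R, ∃ d, d ∈ D ∧ gd.src d = gd.src (y : G) := by
    rintro ⟨y, d, hd, hdy⟩; exact ⟨d, hd, hdy⟩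
  choose δ hδD hδs using hsel
  have hδcont : Continuous δ := by
    rw [continuous_def]
    intro V hV
    have heq : δ ⁻¹' V = Subtype.val ⁻¹' (gd.src ⁻¹' (gd.src '' (V ∩ D))) := by
      ext y
      simp only [Set.mem_preimage]
      constructor
      · intro hyV
        exact ⟨δ y, ⟨hyV, hδD y⟩, hδs y⟩
      · rintro ⟨d, ⟨hdV, hdD⟩, hds⟩
        have : d = δ y := hDb.1 hdD (hδD y) (by rw [hds, hδs])
        exact this ▸ hdV
    rw [heq]
    exact (((gd.isOpenMap_src _ (hV.inter hDo)).preimage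
      gd.continuous_src)).preimage continuous_subtype_val
  have hcomp' : ∀ y : R, gd.src (y : G) = gd.rng (gd.inv (δ y)) := fun y => by
    rw [gd.rng_inv, hδs]
  set g : R → G := fun y => gd.comp (y : G) (gd.inv (δ y)) (hcomp' y) with hgdef
  have hgcont : Continuous g := by
    have hmk : Continuous fun y : R =>
        (⟨((y : G), gd.inv (δ y)), hcomp' y⟩ : {q : G × G // gd.src q.1 = gd.rng q.2}) :=
      Continuous.subtype_mk
        (continuous_subtype_val.prodMk (gd.continuous_inv.comp hδcont)) _
    exact gd.continuous_comp.comp hmk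
  have key : gd.setProd U D = Subtype.val '' (g ⁻¹' U) := by
    ext y; constructor
    · rintro ⟨u, hu, d, hd, h, rfl⟩
      have hyR : gd.comp u d h ∈ R := ⟨d, hd, (gd.src_comp u d h).symm⟩
      refine ⟨⟨_, hyR⟩, ?_, rfl⟩
      have hδ : δ ⟨_, hyR⟩ = d :=
        hDb.1 (hδD _) hd (by rw [hδs]; exact gd.src_comp u d h)
      show g ⟨_, hyR⟩ ∈ U
      have hval : g ⟨_, hyR⟩ = u := by
        show gd.comp (gd.comp u d h) (gd.inv (δ ⟨_, hyR⟩)) (hcomp' ⟨_, hyR⟩) = u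
        rw [gd.comp_congr_right (congrArg gd.inv hδ) (hcomp' _)]
        exact gd.comp_comp_inv u d h _
      rw [hval]; exact hu
    · rintro ⟨y', hyU, rfl⟩
      have h1 : gd.src (g y') = gd.rng (δ y') := by
        show gd.src (gd.comp _ (gd.inv (δ y')) (hcomp' y')) = gd.rng (δ y')
        rw [gd.src_comp, gd.src_inv]
      refine ⟨g y', hyU, δ y', hδD y', h1, ?_⟩
      -- (y d⁻¹) d = y
      have h2 : gd.src (y' : G) = gd.rng (gd.inv (δ y')) := hcomp' y'
      have := gd.comp_comp_inv (y' : G) (gd.inv (δ y'))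
      -- use comp_comp_inv with d := inv (δ y') and inv_inv
      have h3 : gd.comp (gd.comp (y' : G) (gd.inv (δ y')) h2) (gd.inv (gd.inv (δ y')))
          (by rw [gd.inv_inv]; exact h1) = (y' : G) :=
        gd.comp_comp_inv (y' : G) (gd.inv (δ y')) h2 _
      calc gd.comp (g y') (δ y') h1
          = gd.comp (gd.comp (y' : G) (gd.inv (δ y')) h2) (gd.inv (gd.inv (δ y')))
            (by rw [gd.inv_inv]; exact h1) := by
            exact (gd.comp_congr_right (gd.inv_inv (δ y')) _).symm
        _ = (y' : G) := h3
  rw [key]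
  exact hRo.isOpenMap_subtype_val _ (hUo.preimage hgcont)

/-- Every compact open set is a finite union of compact open bisections. -/
lemma exists_bisection_cover {U : Set G} (hUc : IsCompact U) (hUo : IsOpen U) :
    ∃ F : Set (Set G), F.Finite ∧
      (∀ S ∈ F, IsCompact S ∧ IsOpen S ∧ gd.IsBisection S ∧ S ⊆ U) ∧ U = ⋃₀ F := by
  classical
  set b : Set (Set G) := {S | (IsCompact S ∧ IsOpen S ∧
    Set.InjOn gd.src S ∧ Set.InjOn gd.rng S) ∧ S ⊆ U} with hb
  have hcover : U ⊆ ⋃ S ∈ b, id S := by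
    intro x hx
    obtain ⟨S, hS, hxS, hSU⟩ := gd.base.exists_subset_of_mem_open hx hUo
    exact Set.mem_biUnion (⟨hS, hSU⟩ : S ∈ b) hxS
  obtain ⟨F, hFb, hFfin, hsub⟩ := hUc.elim_finite_subcover_image
    (fun S (hS : S ∈ b) => hS.1.2.1) hcover
  refine ⟨F, hFfin, ?_, ?_⟩
  · intro S hS
    obtain ⟨⟨h1, h2, h3, h4⟩, h5⟩ := hFb hS
    exact ⟨h1, h2, ⟨h3, h4⟩, h5⟩
  · apply Set.Subset.antisymm
    · intro x hx
      obtain ⟨S, hS, hxS⟩ := Set.mem_iUnion₂.1 (hsub hx)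
      exact ⟨S, hS, hxS⟩
    · rintro x ⟨S, hS, hxS⟩
      exact (hFb hS).2 hxS

lemma CO_setProd {U V : Set G} (hU : CO U) (hV : CO V) : CO (gd.setProd U V) := by
  refine ⟨gd.isCompact_setProd hU.1 hV.1, ?_⟩
  obtain ⟨F, hFfin, hFprop, hFeq⟩ := gd.exists_bisection_cover hU.1 hU.2
  rw [hFeq, gd.setProd_sUnion_left]
  exact isOpen_biUnion fun S hS =>
    gd.isOpen_setProd_left (hFprop S hS).2.1 (hFprop S hS).2.2.1 hV.2

lemma CO_empty : CO (∅ : Set G) := ⟨isCompact_empty, isOpen_empty⟩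

lemma CO_union {U V : Set G} (hU : CO U) (hV : CO V) : CO (U ∪ V) :=
  ⟨hU.1.union hV.1, hU.2.union hV.2⟩

lemma CO_inv_image {U : Set G} (hU : CO U) : CO (gd.inv '' U) :=
  ⟨hU.1.image gd.continuous_inv, gd.isOpen_inv_image hU.2⟩

/-- Compact open neighborhoods inside open subsets of the unit space. -/
lemma exists_CO_nbhd (heff : gd.Effective) {u : G} {Ω : Set G} (hu : u ∈ Ω)
    (hΩ : IsOpen Ω) (hΩu : Ω ⊆ gd.units) :
    ∃ N : Set G, u ∈ N ∧ IsCompact N ∧ IsOpen N ∧ N ⊆ Ω := by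
  haveI := gd.t2_units
  haveI := gd.locallyCompact_units
  haveI := gd.totallyDisconnected_units
  set X := {x : G // gd.src x = x}
  have huu : gd.src u = u := hΩu hu
  set u' : X := ⟨u, huu⟩ with hu'
  have hΩ'o : IsOpen (Subtype.val ⁻¹' Ω : Set X) := hΩ.preimage continuous_subtype_val
  obtain ⟨K, hKc, hKint, hKsub⟩ := exists_compact_subset hΩ'o (show u' ∈ _ from hu)
  obtain ⟨V, hVclopen, hV1, hV2⟩ :=
    (loc_compact_Haus_tot_disc_of_zero_dim (H := X)).exists_subset_of_mem_open
      hKint isOpen_interior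
  have hVc : IsCompact V := hKc.of_isClosed_subset hVclopen.1 (hV2.trans interior_subset)
  refine ⟨Subtype.val '' V, ⟨u', hV1, rfl⟩, hVc.image continuous_subtype_val, ?_, ?_⟩
  · obtain ⟨W, hWo, hWeq⟩ := isOpen_induced_iff.1 hVclopen.2
    have : Subtype.val '' V = W ∩ gd.units := by
      rw [← hWeq, Set.image_preimage_eq_inter_range, Subtype.range_coe_subtype]
      rfl
    rw [this]
    exact hWo.inter (gd.units_isOpen heff)
  · rintro _ ⟨v, hv, rfl⟩
    exact hKsub (hV2.trans interior_subset hv)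

/-- Hausdorff separation of units, by open subsets of `G`. -/
lemma units_t2 (heff : gd.Effective) {u v : G} (hu : u ∈ gd.units) (hv : v ∈ gd.units)
    (huv : u ≠ v) : ∃ O₁ O₂ : Set G, IsOpen O₁ ∧ IsOpen O₂ ∧ u ∈ O₁ ∧ v ∈ O₂ ∧
      ∀ x, x ∈ O₁ → x ∈ O₂ → False := by
  haveI := gd.t2_units
  set X := {x : G // gd.src x = x}
  obtain ⟨O₁', O₂', hO₁o, hO₂o, hu', hv', hdisj⟩ :=
    t2_separation (x := (⟨u, hu⟩ : X)) (y := ⟨v, hv⟩) (by simpa [Subtype.ext_iff] using huv)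
  obtain ⟨W₁, hW₁o, hW₁eq⟩ := isOpen_induced_iff.1 hO₁o
  obtain ⟨W₂, hW₂o, hW₂eq⟩ := isOpen_induced_iff.1 hO₂o
  refine ⟨W₁ ∩ gd.units, W₂ ∩ gd.units, hW₁o.inter (gd.units_isOpen heff),
    hW₂o.inter (gd.units_isOpen heff), ?_, ?_, ?_⟩
  · refine ⟨?_, hu⟩
    have : (⟨u, hu⟩ : X) ∈ Subtype.val ⁻¹' W₁ := hW₁eq ▸ hu'
    exact this
  · refine ⟨?_, hv⟩
    have : (⟨v, hv⟩ : X) ∈ Subtype.val ⁻¹' W₂ := hW₂eq ▸ hv'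
    exact this
  · rintro x ⟨hx₁, hxu⟩ ⟨hx₂, -⟩
    have h1 : (⟨x, hxu⟩ : X) ∈ O₁' := by rw [← hW₁eq]; exact hx₁
    have h2 : (⟨x, hxu⟩ : X) ∈ O₂' := by rw [← hW₂eq]; exact hx₂
    exact Set.disjoint_iff.1 hdisj ⟨h1, h2⟩ 

/-- Shrinking lemma for a single open bisection, using effectiveness. -/
lemma effective_shrink_one (heff : gd.Effective) {S Ω : Set G} (hSo : IsOpen S)
    (hSb : gd.IsBisection S) (hΩo : IsOpen Ω) (hΩu : Ω ⊆ gd.units) (hΩne : Ω.Nonempty) :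
    ∃ N : Set G, N.Nonempty ∧ IsCompact N ∧ IsOpen N ∧ N ⊆ Ω ∧
      ∀ γ ∈ S, gd.src γ ∈ N → gd.rng γ ∈ N → γ ∈ gd.units := by
  by_cases hc : ∃ γ ∈ S, gd.src γ ∈ Ω ∧ gd.rng γ ≠ gd.src γ
  · obtain ⟨γ₁, hγ₁S, hγ₁Ω, hγ₁ne⟩ := hc
    obtain ⟨Or, Os, hOro, hOso, hrO, hsO, hdisj⟩ :=
      gd.units_t2 heff (gd.rng_mem_units γ₁) (gd.src_mem_units γ₁) hγ₁ne
    set Ω' : Set G := Ω ∩ Os ∩ gd.src '' (S ∩ gd.rng ⁻¹' Or) with hΩ'def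
    have hΩ'o : IsOpen Ω' := ((hΩo.inter hOso).inter
      (gd.isOpenMap_src _ (hSo.inter (hOro.preimage gd.continuous_rng))))
    have hmem : gd.src γ₁ ∈ Ω' := ⟨⟨hγ₁Ω, hsO⟩, γ₁, ⟨hγ₁S, hrO⟩, rfl⟩
    obtain ⟨N, hN1, hN2, hN3, hN4⟩ := gd.exists_CO_nbhd heff hmem hΩ'o
      (fun x hx => hΩu hx.1.1)
    refine ⟨N, ⟨_, hN1⟩, hN2, hN3, fun x hx => (hN4 hx).1.1, ?_⟩
    intro γ hγS hγs hγr
    exfalso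
    obtain ⟨-, γ', ⟨hγ'S, hγ'r⟩, hγ's⟩ := hN4 hγs
    have hγγ' : γ' = γ := hSb.1 hγ'S hγS hγ's
    exact hdisj (gd.rng γ) (hγγ' ▸ hγ'r) (hN4 hγr).1.2
  · push_neg at hc
    obtain ⟨u₀, hu₀⟩ := hΩne
    obtain ⟨N, hN1, hN2, hN3, hN4⟩ := gd.exists_CO_nbhd heff hu₀ hΩo hΩu
    refine ⟨N, ⟨u₀, hN1⟩, hN2, hN3, hN4, ?_⟩
    intro γ hγS hγs _
    have hsub : S ∩ gd.src ⁻¹' Ω ⊆ {x : G | gd.src x = gd.rng x} :=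
      fun x ⟨hxS, hxΩ⟩ => (hc x hxS hxΩ).symm
    have : γ ∈ interior {x : G | gd.src x = gd.rng x} :=
      interior_maximal hsub (hSo.inter (hΩo.preimage gd.continuous_src))
        ⟨hγS, hN4 hγs⟩
    rwa [heff] at this

/-- Shrinking lemma for a compact open set, using effectiveness. -/
lemma effective_shrink (heff : gd.Effective) {C Ω : Set G} (hC : CO C)
    (hΩo : IsOpen Ω) (hΩu : Ω ⊆ gd.units) (hΩne : Ω.Nonempty) :
    ∃ N : Set G, N.Nonempty ∧ IsCompact N ∧ IsOpen N ∧ N ⊆ Ω ∧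
      ∀ γ ∈ C, gd.src γ ∈ N → gd.rng γ ∈ N → γ ∈ gd.units := by
  obtain ⟨F, hFfin, hFprop, hFeq⟩ := gd.exists_bisection_cover hC.1 hC.2
  suffices key : ∀ F : Set (Set G), F.Finite →
      (∀ S ∈ F, IsCompact S ∧ IsOpen S ∧ gd.IsBisection S ∧ S ⊆ C) →
      ∀ Ω : Set G, IsOpen Ω → Ω ⊆ gd.units → Ω.Nonempty →
      ∃ N : Set G, N.Nonempty ∧ IsCompact N ∧ IsOpen N ∧ N ⊆ Ω ∧
        ∀ γ ∈ ⋃₀ F, gd.src γ ∈ N → gd.rng γ ∈ N → γ ∈ gd.units by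
    obtain ⟨N, h1, h2, h3, h4, h5⟩ := key F hFfin hFprop Ω hΩo hΩu hΩne
    exact ⟨N, h1, h2, h3, h4, fun γ hγ => h5 γ (hFeq ▸ hγ)⟩
  intro F hFfin
  refine Set.Finite.induction_on F hFfin ?_ ?_
  · intro _ Ω hΩo hΩu hΩne
    obtain ⟨u₀, hu₀⟩ := hΩne
    obtain ⟨N, hN1, hN2, hN3, hN4⟩ := gd.exists_CO_nbhd heff hu₀ hΩo hΩu
    exact ⟨N, ⟨u₀, hN1⟩, hN2, hN3, hN4, by simp⟩
  · rintro S F' hSF' hF'fin ih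
    intro hFprop' Ω hΩo hΩu hΩne
    obtain ⟨N₁, hN₁ne, hN₁c, hN₁o, hN₁Ω, hN₁prop⟩ :=
      gd.effective_shrink_one heff (hFprop' S (Set.mem_insert S F')).2.1
        (hFprop' S (Set.mem_insert S F')).2.2.1 hΩo hΩu hΩne
    obtain ⟨N, hNne, hNc, hNo, hNN₁, hNprop⟩ :=
      ih (fun T hT => hFprop' T (Set.mem_insert_of_mem S hT)) N₁ hN₁o
        (hN₁Ω.trans hΩu) hN₁ne
    refine ⟨N, hNne, hNc, hNo, hNN₁.trans hN₁Ω, ?_⟩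
    rintro γ hγ hγs hγr
    rw [Set.sUnion_insert] at hγ
    rcases hγ with hγS | hγF'
    · exact hN₁prop γ hγS (hNN₁ hγs) (hNN₁ hγr)
    · exact hNprop γ hγF' hγs hγr

end AmpleGroupoid
-- AUX END

/-- Let `G` be a second-countable ample groupoid which is minimal and effective and
in which every compact open subset is regular open.  Then the Steinberg algebra
`A_B(G)` over the Boolean semifield is congruence-simple.  Here `A_B(G)` is
identified with the collection of compact open subsets of `G`, with addition
given by union and multiplication by the set product; congruence-simplicity says
that every equivalence relation on compact open sets which is compatible with
union and set product is either the equality relation or the full relation. -/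
theorem stmt16 {G : Type*} [TopologicalSpace G]
    [SecondCountableTopology G] (gd : AmpleGroupoid G)
    (hmin : gd.Minimal) (heff : gd.Effective)
    (hreg : ∀ U : Set G, IsCompact U → IsOpen U → U = interior (closure U)) :
    ∀ r : Set G → Set G → Prop,
      (∀ U, CO U → r U U) →
      (∀ U V, CO U → CO V → r U V → r V U) →
      (∀ U V W, CO U → CO V → CO W → r U V → r V W → r U W) →
      (∀ U V W, CO U → CO V → CO W → r U V → r (U ∪ W) (V ∪ W)) →
      (∀ U V W, CO U → CO V → CO W → r U V →
        r (gd.setProd U W) (gd.setProd V W) ∧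
        r (gd.setProd W U) (gd.setProd W V)) →
      (∀ U V, CO U → CO V → r U V → U = V) ∨
        (∀ U V, CO U → CO V → r U V) := by
  intro r hrefl hsymm htrans hadd hmul
  by_cases hdiag : ∀ U V, CO U → CO V → r U V → U = V
  · exact Or.inl hdiag
  right
  push_neg at hdiag
  obtain ⟨U, V, hU, hV, hrUV, hne⟩ := hdiag
  -- Step 1: find compact open `A ⊊ B` with `r B A`.
  have step1 : ∃ A B : Set G, CO A ∧ CO B ∧ A ⊆ B ∧ A ≠ B ∧ r B A := by
    have hUV : CO (U ∪ V) := CO_union hU hV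
    have h1 : r (U ∪ V) V := by
      have := hadd U V V hU hV hV hrUV
      rwa [Set.union_self] at this
    have h2 : r (U ∪ V) U := by
      have := hadd V U U hV hU hU (hsymm U V hU hV hrUV)
      rwa [Set.union_self, Set.union_comm V U] at this
    by_cases hc : U ∪ V = V
    · exact ⟨U, U ∪ V, hU, hUV, Set.subset_union_left,
        fun hU' => hne (hU'.trans hc), h2⟩
    · exact ⟨V, U ∪ V, hV, hUV, Set.subset_union_right,
        fun hV' => hc hV'.symm, h1⟩
  obtain ⟨A, B, hA, hB, hAB, hABne, hrBA⟩ := step1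
  -- Step 2: a point of `B` outside the closure of `A` (uses regular openness).
  have step2 : ∃ x, x ∈ B ∧ x ∉ closure A := by
    by_contra hcon
    push_neg at hcon
    apply hABne
    refine Set.Subset.antisymm hAB ?_
    have : B ⊆ interior (closure A) := interior_maximal hcon hB.2
    rwa [← hreg A hA.1 hA.2] at this
  obtain ⟨x, hxB, hxA⟩ := step2
  have hBopen : IsOpen (B ∩ (closure A)ᶜ) := hB.2.inter isClosed_closure.isOpen_compl
  obtain ⟨D, hDbasis, hxD, hDsub⟩ :=
    gd.base.exists_subset_of_mem_open (show x ∈ B ∩ (closure A)ᶜ from ⟨hxB, hxA⟩) hBopen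
  obtain ⟨hDc, hDo, hDs, hDr⟩ := hDbasis
  have hDB : D ⊆ B := fun d hd => (hDsub hd).1
  have hDA : ∀ d ∈ D, d ∉ closure A := fun d hd => (hDsub hd).2
  set Dinv := gd.inv '' D with hDinvdef
  have hDinvCO : CO Dinv := gd.CO_inv_image ⟨hDc, hDo⟩
  set Eset := gd.setProd Dinv B with hEdef
  set Fset := gd.setProd Dinv A with hFdef
  have hECO : CO Eset := gd.CO_setProd hDinvCO hB
  have hFCO : CO Fset := gd.CO_setProd hDinvCO hA
  have hrEF : r Eset Fset := (hmul B A Dinv hB hA hDinvCO hrBA).2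
  have hsrcD_units : gd.src '' D ⊆ gd.units := by
    rintro _ ⟨d, hd, rfl⟩; exact gd.src_mem_units d
  have hsrcDE : gd.src '' D ⊆ Eset := by
    rintro _ ⟨d, hd, rfl⟩
    have h : gd.src (gd.inv d) = gd.rng d := gd.src_inv d
    exact ⟨gd.inv d, ⟨d, hd, rfl⟩, d, hDB hd, h, gd.inv_comp d h⟩
  have hsrcDF : ∀ z ∈ Fset, z ∉ gd.src '' D := by
    rintro z ⟨di, ⟨d, hd, rfl⟩, a, ha, hc, rfl⟩ ⟨d', hd', hz⟩
    have hzu : gd.comp (gd.inv d) a hc ∈ gd.units := by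
      rw [← hz]; exact gd.src_mem_units d'
    have h2 : gd.src d = gd.rng (gd.comp (gd.inv d) a hc) := by
      rw [gd.rng_comp, gd.rng_inv]
    have e1 : gd.comp d (gd.comp (gd.inv d) a hc) h2 = a := gd.comp_inv_comp d a hc h2
    have e2 : gd.comp d (gd.comp (gd.inv d) a hc) h2 = d := gd.comp_unit _ _ _ hzu
    have had : a = d := by rw [← e1, e2]
    exact hDA d hd (had ▸ subset_closure ha)
  -- Step 3: effectiveness shrink.
  have hΩo : IsOpen (gd.src '' D) := gd.isOpenMap_src D hDo
  have hΩne : (gd.src '' D).Nonempty := ⟨gd.src x, x, hxD, rfl⟩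
  obtain ⟨N, hNne, hNc, hNo, hNΩ, hNprop⟩ :=
    gd.effective_shrink heff (CO_union hECO hFCO) hΩo hsrcD_units hΩne
  have hNu : N ⊆ gd.units := hNΩ.trans hsrcD_units
  have hNCO : CO N := ⟨hNc, hNo⟩
  have hcutE : gd.setProd (gd.setProd N Eset) N = Eset ∩ gd.rng ⁻¹' N ∩ gd.src ⁻¹' N := by
    rw [gd.setProd_unit_left hNu, gd.setProd_unit_right hNu]
  have hcutF : gd.setProd (gd.setProd N Fset) N = Fset ∩ gd.rng ⁻¹' N ∩ gd.src ⁻¹' N := by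
    rw [gd.setProd_unit_left hNu, gd.setProd_unit_right hNu]
  have hrcut : r (gd.setProd (gd.setProd N Eset) N) (gd.setProd (gd.setProd N Fset) N) := by
    have s1 := (hmul Eset Fset N hECO hFCO hNCO hrEF).2
    exact (hmul _ _ N (gd.CO_setProd hNCO hECO) (gd.CO_setProd hNCO hFCO) hNCO s1).1
  have hE'eq : gd.setProd (gd.setProd N Eset) N = N := by
    rw [hcutE]
    apply Set.Subset.antisymm
    · rintro e ⟨⟨heE, her⟩, hes⟩
      have heu : e ∈ gd.units := hNprop e (Or.inl heE) hes her
      have hse : gd.src e = e := heu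
      rw [← hse]; exact hes
    · intro n hn
      have hnu : gd.src n = n := hNu hn
      have hnr : gd.rng n = n := gd.unit_rng (hNu hn)
      exact ⟨⟨hsrcDE (hNΩ hn), by rw [Set.mem_preimage, hnr]; exact hn⟩,
        by rw [Set.mem_preimage, hnu]; exact hn⟩
  have hF'eq : gd.setProd (gd.setProd N Fset) N = ∅ := by
    rw [hcutF, Set.eq_empty_iff_forall_notMem]
    rintro f ⟨⟨hfF, hfr⟩, hfs⟩
    have hfu : f ∈ gd.units := hNprop f (Or.inr hfF) hfs hfr
    have hsf : gd.src f = f := hfu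
    have hfN : f ∈ N := by rw [← hsf]; exact hfs
    exact hsrcDF f hfF (hNΩ hfN)
  rw [hE'eq, hF'eq] at hrcut
  have hrK : r ∅ N := hsymm N ∅ hNCO CO_empty hrcut
  -- Step 4: minimality gives the orbit of `N` is everything.
  have horb : ∀ u ∈ gd.units, ∃ γ, gd.src γ ∈ N ∧ gd.rng γ = u := by
    set D₀ := gd.rng '' (gd.src ⁻¹' N) with hD₀def
    have hD₀u : D₀ ⊆ gd.units := by rintro _ ⟨γ, hγ, rfl⟩; exact gd.rng_mem_units γ
    have hD₀o : IsOpen D₀ := gd.isOpenMap_rng _ (hNo.preimage gd.continuous_src)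
    have hD₀inv : ∀ a : G, gd.src a ∈ D₀ → gd.rng a ∈ D₀ := by
      intro a ha
      obtain ⟨γ, hγ, hγr⟩ := ha
      have h : gd.src a = gd.rng γ := hγr.symm
      refine ⟨gd.comp a γ h, ?_, gd.rng_comp a γ h⟩
      rw [Set.mem_preimage, gd.src_comp]; exact hγ
    have hmm := hmin D₀ ⟨D₀, hD₀o, (Set.inter_eq_left.mpr hD₀u).symm⟩ hD₀inv
    have hND₀ : N ⊆ D₀ := by
      intro n hn
      exact ⟨n, by rw [Set.mem_preimage, hNu hn]; exact hn, gd.unit_rng (hNu hn)⟩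
    rcases hmm with h0 | h0
    · exfalso
      obtain ⟨n, hn⟩ := hNne
      rw [h0] at hND₀
      exact hND₀ hn
    · intro u hu
      rw [← h0] at hu
      obtain ⟨γ, hγ, hγr⟩ := hu
      exact ⟨γ, hγ, hγr⟩
  -- Step 5: `r ∅ L` for every compact open `L`.
  have hall : ∀ L, CO L → r ∅ L := by
    intro L hL
    have hEx : ∀ x' ∈ L, ∃ E : Set G, x' ∈ E ∧ E ⊆ L ∧ CO E ∧ r ∅ E := by
      intro x' hx'
      obtain ⟨γ, hγN, hγr⟩ := horb (gd.src x') (gd.src_mem_units x')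
      obtain ⟨D₁, hD₁basis, hxD₁, hD₁sub⟩ := gd.base.exists_subset_of_mem_open hx' hL.2
      obtain ⟨hD₁c, hD₁o, hD₁s, hD₁r⟩ := hD₁basis
      have hγopen : γ ∈ gd.src ⁻¹' N := hγN
      obtain ⟨D₂, hD₂basis, hγD₂, hD₂sub⟩ :=
        gd.base.exists_subset_of_mem_open hγopen (hNo.preimage gd.continuous_src)
      obtain ⟨hD₂c, hD₂o, hD₂s, hD₂r⟩ := hD₂basis
      have hD₁CO : CO D₁ := ⟨hD₁c, hD₁o⟩
      have hD₂CO : CO D₂ := ⟨hD₂c, hD₂o⟩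
      have h1 : r ∅ D₂ := by
        have := (hmul ∅ N D₂ CO_empty hNCO hD₂CO hrK).2
        rwa [gd.setProd_empty_right, gd.setProd_unit_right hNu,
          Set.inter_eq_left.mpr hD₂sub] at this
      have h2 : r ∅ (gd.setProd D₁ D₂) := by
        have := (hmul ∅ D₂ D₁ CO_empty hD₂CO hD₁CO h1).2
        rwa [gd.setProd_empty_right] at this
      have h3 : r ∅ (gd.setProd (gd.setProd D₁ D₂) (gd.inv '' D₂)) := by
        have := (hmul ∅ (gd.setProd D₁ D₂) (gd.inv '' D₂) CO_empty
          (gd.CO_setProd hD₁CO hD₂CO) (gd.CO_inv_image hD₂CO) h2).1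
        rwa [gd.setProd_empty_left] at this
      refine ⟨gd.setProd (gd.setProd D₁ D₂) (gd.inv '' D₂), ?_, ?_,
        gd.CO_setProd (gd.CO_setProd hD₁CO hD₂CO) (gd.CO_inv_image hD₂CO), h3⟩
      · have hx'γ : gd.src x' = gd.rng γ := hγr.symm
        have hm1 : gd.comp x' γ hx'γ ∈ gd.setProd D₁ D₂ :=
          gd.comp_mem_setProd hxD₁ hγD₂ hx'γ
        have h2' : gd.src (gd.comp x' γ hx'γ) = gd.rng (gd.inv γ) := by
          rw [gd.src_comp, gd.rng_inv]
        have hval : gd.comp (gd.comp x' γ hx'γ) (gd.inv γ) h2' = x' :=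
          gd.comp_comp_inv x' γ hx'γ h2'
        rw [← hval]
        exact gd.comp_mem_setProd hm1 (⟨γ, hγD₂, rfl⟩ : gd.inv γ ∈ gd.inv '' D₂) h2'
      · rintro _ ⟨p, ⟨d₁, hd₁, d₂, hd₂, h12, rfl⟩, _, ⟨d₂', hd₂', rfl⟩, hcmp, rfl⟩
        have hss : gd.src d₂ = gd.src d₂' := by
          rw [← gd.src_comp d₁ d₂ h12, hcmp, gd.rng_inv]
        have hdd : d₂' = d₂ := hD₂s hd₂' hd₂ hss.symm
        apply hD₁sub
        have e1 := gd.comp_congr_right (congrArg gd.inv hdd) hcmp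
        have e2 := gd.comp_comp_inv d₁ d₂ h12 (congrArg gd.inv hdd ▸ hcmp)
        rw [e1, e2]
        exact hd₁
    choose! Efun hE1 hE2 hE3 hE4 using hEx
    have hcover : L ⊆ ⋃ x' ∈ L, Efun x' := fun y hy => Set.mem_biUnion hy (hE1 y hy)
    obtain ⟨T, hTL, hTfin, hTsub⟩ :=
      hL.1.elim_finite_subcover_image (fun x' hx' => (hE3 x' hx').2) hcover
    have hLeq : L = ⋃ x' ∈ T, Efun x' := by
      apply Set.Subset.antisymm hTsub
      intro y hy
      obtain ⟨x', hx', hyx⟩ := Set.mem_iUnion₂.1 hy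
      exact hE2 x' (hTL hx') hyx
    have main : ∀ s : Set G, s.Finite → s ⊆ T →
        CO (⋃ x' ∈ s, Efun x') ∧ r ∅ (⋃ x' ∈ s, Efun x') := by
      intro s hsfin
      refine Set.Finite.induction_on s hsfin ?_ ?_
      · intro _
        rw [Set.biUnion_empty]
        exact ⟨CO_empty, hrefl ∅ CO_empty⟩
      · rintro a s ha hsfin ih hsub
        have hih := ih (fun t ht => hsub (Set.mem_insert_of_mem a ht))
        have haT : a ∈ T := hsub (Set.mem_insert a s)
        have haCO : CO (Efun a) := hE3 a (hTL haT)
        have har : r ∅ (Efun a) := hE4 a (hTL haT)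
        rw [Set.biUnion_insert]
        refine ⟨CO_union haCO hih.1, ?_⟩
        have hstep := hadd ∅ (Efun a) (⋃ x' ∈ s, Efun x') CO_empty haCO hih.1 har
        rw [Set.empty_union] at hstep
        exact htrans ∅ _ _ CO_empty hih.1 (CO_union haCO hih.1) hih.2 hstep
    rw [hLeq]
    exact (main T hTfin Set.Subset.rfl).2
  intro U' V' hU' hV'
  exact htrans U' ∅ V' hU' CO_empty hV'
    (hsymm ∅ U' CO_empty hU' (hall U' hU')) (hall V' hV')
end

section
/- Let S be a commutative semiring and G a discrete groupoid whose unit space is finite, with orbits O₁,…,O_k of sizes n₁,…,n_k and isotropy groups G₁,…,G_k. Then the Steinberg algebra A_S(G) is isomorphic as an S-algebra to the product ∏_{i=1}^k M_{n_i}(S G_i) of matrix algebras over group algebras. -/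
/-- A (discrete, algebraic) groupoid: a set of arrows with source, range,
inversion and a partially defined composition. -/
structure DiscGroupoid (G : Type*) where
  src : G → G
  rng : G → G
  inv : G → G
  comp : (a b : G) → src a = rng b → G
  src_comp : ∀ a b h, src (comp a b h) = src b
  rng_comp : ∀ a b h, rng (comp a b h) = rng a
  src_src : ∀ a, src (src a) = src a
  rng_src : ∀ a, rng (src a) = src a
  src_rng : ∀ a, src (rng a) = rng a
  rng_rng : ∀ a, rng (rng a) = rng a
  comp_assoc : ∀ a b c h1 h2 h3 h4,
    comp (comp a b h1) c h2 = comp a (comp b c h3) h4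
  unit_comp : ∀ a b (h : src a = rng b), rng a = a → comp a b h = b
  comp_unit : ∀ a b (h : src a = rng b), src b = b → comp a b h = a
  src_inv : ∀ a, src (inv a) = rng a
  rng_inv : ∀ a, rng (inv a) = src a
  comp_inv : ∀ a (h : src a = rng (inv a)), comp a (inv a) h = rng a
  inv_comp : ∀ a (h : src (inv a) = rng a), comp (inv a) a h = src a

namespace DiscGroupoid

variable {G : Type*} (gd : DiscGroupoid G)

/-- The unit space. -/
def units : Set G := {x | gd.src x = x}

end DiscGroupoid

namespace DiscGroupoid

variable {G : Type*} (gd : DiscGroupoid G)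

lemma comp_congr {a a' b b' : G} (ha : a = a') (hb : b = b')
    (h : gd.src a = gd.rng b) (h' : gd.src a' = gd.rng b') :
    gd.comp a b h = gd.comp a' b' h' := by subst ha; subst hb; rfl

/-- `a⁻¹ ∘ (a ∘ b) = b`. -/
lemma cancel1 (a b : G) (hab : gd.src a = gd.rng b)
    (h2 : gd.src (gd.inv a) = gd.rng (gd.comp a b hab)) :
    gd.comp (gd.inv a) (gd.comp a b hab) h2 = b := by
  have h1 : gd.src (gd.inv a) = gd.rng a := gd.src_inv a
  have h2' : gd.src (gd.comp (gd.inv a) a h1) = gd.rng b := by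
    rw [gd.src_comp]; exact hab
  rw [← gd.comp_assoc (gd.inv a) a b h1 h2' hab h2,
    gd.comp_congr (gd.inv_comp a h1) rfl h2'
      (by rw [gd.src_src]; exact hab)]
  exact gd.unit_comp _ _ _ (gd.rng_src a)

/-- `a ∘ (a⁻¹ ∘ b) = b`. -/
lemma cancel2 (a b : G) (hab : gd.src (gd.inv a) = gd.rng b)
    (h2 : gd.src a = gd.rng (gd.comp (gd.inv a) b hab)) :
    gd.comp a (gd.comp (gd.inv a) b hab) h2 = b := by
  have h1 : gd.src a = gd.rng (gd.inv a) := (gd.rng_inv a).symm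
  have h2' : gd.src (gd.comp a (gd.inv a) h1) = gd.rng b := by
    rw [gd.src_comp]; exact hab
  rw [← gd.comp_assoc a (gd.inv a) b h1 h2' hab h2,
    gd.comp_congr (gd.comp_inv a h1) rfl h2'
      (by rw [gd.src_rng, ← gd.src_inv]; exact hab)]
  exact gd.unit_comp _ _ _ (gd.rng_rng a)

/-- `(a ∘ b) ∘ b⁻¹ = a`. -/
lemma cancel3 (a b : G) (hab : gd.src a = gd.rng b)
    (h2 : gd.src (gd.comp a b hab) = gd.rng (gd.inv b)) :
    gd.comp (gd.comp a b hab) (gd.inv b) h2 = a := by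
  have h3 : gd.src b = gd.rng (gd.inv b) := (gd.rng_inv b).symm
  have h4 : gd.src a = gd.rng (gd.comp b (gd.inv b) h3) := by
    rw [gd.rng_comp]; exact hab
  rw [gd.comp_assoc a b (gd.inv b) hab h2 h3 h4,
    gd.comp_congr rfl (gd.comp_inv b h3) h4 (by rw [gd.rng_rng]; exact hab)]
  exact gd.comp_unit _ _ _ (gd.src_rng b)

/-- `(a ∘ b⁻¹) ∘ b = a`. -/
lemma cancel4 (a b : G) (hab : gd.src a = gd.rng (gd.inv b))
    (h2 : gd.src (gd.comp a (gd.inv b) hab) = gd.rng b) :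
    gd.comp (gd.comp a (gd.inv b) hab) b h2 = a := by
  have h3 : gd.src (gd.inv b) = gd.rng b := gd.src_inv b
  have h4 : gd.src a = gd.rng (gd.comp (gd.inv b) b h3) := by
    rw [gd.rng_comp]; exact hab
  rw [gd.comp_assoc a (gd.inv b) b hab h2 h3 h4,
    gd.comp_congr rfl (gd.inv_comp b h3) h4
      (by rw [gd.rng_src]; exact hab.trans (gd.rng_inv b))]
  exact gd.comp_unit _ _ _ (gd.src_src b)


open Classical in
/-- Total (junk-valued) composition. -/
noncomputable def m (a b : G) : G :=
  if h : gd.src a = gd.rng b then gd.comp a b h else a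

lemma m_def (a b : G) (h : gd.src a = gd.rng b) : gd.m a b = gd.comp a b h :=
  dif_pos h

lemma src_m (a b : G) (h : gd.src a = gd.rng b) : gd.src (gd.m a b) = gd.src b := by
  rw [gd.m_def a b h, gd.src_comp]

lemma rng_m (a b : G) (h : gd.src a = gd.rng b) : gd.rng (gd.m a b) = gd.rng a := by
  rw [gd.m_def a b h, gd.rng_comp]

lemma m_assoc (a b c : G) (h1 : gd.src a = gd.rng b) (h2 : gd.src b = gd.rng c) :
    gd.m (gd.m a b) c = gd.m a (gd.m b c) := by
  have h1' : gd.src (gd.comp a b h1) = gd.rng c := by rw [gd.src_comp]; exact h2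
  have h2' : gd.src a = gd.rng (gd.comp b c h2) := by rw [gd.rng_comp]; exact h1
  rw [gd.m_def a b h1, gd.m_def b c h2, gd.m_def _ _ h1', gd.m_def _ _ h2']
  exact gd.comp_assoc a b c h1 h1' h2 h2'

lemma m_cancel1 (a b : G) (h : gd.src a = gd.rng b) :
    gd.m (gd.inv a) (gd.m a b) = b := by
  have h2 : gd.src (gd.inv a) = gd.rng (gd.comp a b h) := by
    rw [gd.src_inv, gd.rng_comp]
  rw [gd.m_def a b h, gd.m_def _ _ h2]
  exact gd.cancel1 a b h h2

lemma m_cancel2 (a b : G) (h : gd.rng a = gd.rng b) :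
    gd.m a (gd.m (gd.inv a) b) = b := by
  have h1 : gd.src (gd.inv a) = gd.rng b := by rw [gd.src_inv]; exact h
  have h2 : gd.src a = gd.rng (gd.comp (gd.inv a) b h1) := by
    rw [gd.rng_comp, gd.rng_inv]
  rw [gd.m_def _ _ h1, gd.m_def _ _ h2]
  exact gd.cancel2 a b h1 h2

lemma m_cancel3 (a b : G) (h : gd.src a = gd.rng b) :
    gd.m (gd.m a b) (gd.inv b) = a := by
  have h2 : gd.src (gd.comp a b h) = gd.rng (gd.inv b) := by
    rw [gd.src_comp, gd.rng_inv]
  rw [gd.m_def a b h, gd.m_def _ _ h2]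
  exact gd.cancel3 a b h h2

lemma m_cancel4 (a b : G) (h : gd.src a = gd.src b) :
    gd.m (gd.m a (gd.inv b)) b = a := by
  have h1 : gd.src a = gd.rng (gd.inv b) := by rw [gd.rng_inv]; exact h
  have h2 : gd.src (gd.comp a (gd.inv b) h1) = gd.rng b := by
    rw [gd.src_comp, gd.src_inv]
  rw [gd.m_def _ _ h1, gd.m_def _ _ h2]
  exact gd.cancel4 a b h1 h2

/-- A bundle of the data extracted from the hypotheses of the main theorem. -/
structure OrbitData (gd : DiscGroupoid G) {k : ℕ} (O : Fin k → Set G) (n : Fin k → ℕ)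
    (Gi : Fin k → Type*) [∀ i, Group (Gi i)] where
  u : Fin k → G
  hu : ∀ i, u i ∈ O i
  e : ∀ i, Gi i ≃ {γ : G // gd.src γ = u i ∧ gd.rng γ = u i}
  he : ∀ i (g h : Gi i),
    ((e i (g * h) : {γ : G // gd.src γ = u i ∧ gd.rng γ = u i}) : G) =
      gd.comp (e i g : {γ : G // gd.src γ = u i ∧ gd.rng γ = u i})
        (e i h : {γ : G // gd.src γ = u i ∧ gd.rng γ = u i})
        (((e i g).2.1).trans (((e i h).2.2).symm))
  idx : ∀ i, (O i) ≃ Fin (n i)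
  arr : ∀ i, (O i) → G
  ha1 : ∀ i v, gd.src (arr i v) = u i
  ha2 : ∀ i v, gd.rng (arr i v) = ↑v

namespace OrbitData

variable {gd} {k : ℕ} {O : Fin k → Set G} {n : Fin k → ℕ} {Gi : Fin k → Type*}
  [∀ i, Group (Gi i)] (d : OrbitData gd O n Gi)

/-- The chosen unit representing the `t`-th element of the `i`-th orbit. -/
def v (i : Fin k) (t : Fin (n i)) : G := ((d.idx i).symm t : G)

lemma v_mem (i : Fin k) (t : Fin (n i)) : d.v i t ∈ O i := ((d.idx i).symm t).2

/-- The chosen arrow from `u i` to `v i t`. -/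
def ga (i : Fin k) (t : Fin (n i)) : G := d.arr i ((d.idx i).symm t)

lemma src_ga (i : Fin k) (t : Fin (n i)) : gd.src (d.ga i t) = d.u i := d.ha1 i _

lemma rng_ga (i : Fin k) (t : Fin (n i)) : gd.rng (d.ga i t) = d.v i t := d.ha2 i _

lemma src_e (i : Fin k) (x : Gi i) : gd.src ((d.e i x : _) : G) = d.u i := (d.e i x).2.1

lemma rng_e (i : Fin k) (x : Gi i) : gd.rng ((d.e i x : _) : G) = d.u i := (d.e i x).2.2

lemma he_m (i : Fin k) (y z : Gi i) :
    ((d.e i (y * z) : _) : G) = gd.m ((d.e i y : _) : G) ((d.e i z : _) : G) := by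
  rw [gd.m_def _ _ (((d.e i y).2.1).trans (((d.e i z).2.2).symm))]
  exact d.he i y z

/-- The basic bijection sending `(i, (r, s), x)` to the arrow
`g_{v i r} ∘ e i x ∘ (g_{v i s})⁻¹`. -/
noncomputable def bmap (p : Σ i : Fin k, (Fin (n i) × Fin (n i)) × Gi i) : G :=
  gd.m (d.ga p.1 p.2.1.1) (gd.m ((d.e p.1 p.2.2 : _) : G) (gd.inv (d.ga p.1 p.2.1.2)))

lemma src_bmap (i : Fin k) (r s : Fin (n i)) (x : Gi i) :
    gd.src (d.bmap ⟨i, (r, s), x⟩) = d.v i s := by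
  simp only [bmap]
  rw [gd.src_m, gd.src_m, gd.src_inv, d.rng_ga]
  · rw [gd.rng_inv, d.src_ga]; exact d.src_e i x
  · rw [gd.rng_m, d.rng_e, d.src_ga]
    rw [gd.rng_inv, d.src_ga]; exact d.src_e i x

lemma rng_bmap (i : Fin k) (r s : Fin (n i)) (x : Gi i) :
    gd.rng (d.bmap ⟨i, (r, s), x⟩) = d.v i r := by
  simp only [bmap]
  rw [gd.rng_m, d.rng_ga]
  rw [gd.rng_m, d.rng_e, d.src_ga]
  rw [gd.rng_inv, d.src_ga]; exact d.src_e i x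

lemma bmap_m (i : Fin k) (r t s : Fin (n i)) (y z : Gi i) :
    gd.m (d.bmap ⟨i, (r, t), y⟩) (d.bmap ⟨i, (t, s), z⟩) = d.bmap ⟨i, (r, s), y * z⟩ := by
  simp only [bmap]
  rw [gd.m_assoc]
  · refine congrArg _ ?_
    rw [gd.m_assoc]
    · rw [gd.m_cancel1]
      · rw [← gd.m_assoc]
        · rw [← d.he_m]
        · exact (d.src_e i y).trans (d.rng_e i z).symm
        · rw [gd.rng_inv, d.src_ga]; exact d.src_e i z
      · rw [gd.rng_m, d.rng_e, d.src_ga]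
        rw [gd.rng_inv, d.src_ga]; exact d.src_e i z
    · rw [gd.rng_inv, d.src_ga]; exact d.src_e i y
    · rw [gd.src_inv, d.rng_ga, gd.rng_m, d.rng_ga]
      rw [gd.rng_m, d.rng_e, d.src_ga]
      rw [gd.rng_inv, d.src_ga]; exact d.src_e i z
  · rw [gd.rng_m, d.rng_e, d.src_ga]
    rw [gd.rng_inv, d.src_ga]; exact d.src_e i y
  · rw [gd.src_m, gd.src_inv, d.rng_ga]
    · rw [gd.rng_m, d.rng_ga]
      rw [gd.rng_m, d.rng_e, d.src_ga]
      rw [gd.rng_inv, d.src_ga]; exact d.src_e i z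
    · rw [gd.rng_inv, d.src_ga]; exact d.src_e i y


/-- Decode an arrow with source `v i s` and range `v i r` into a group element. -/
noncomputable def dec (i : Fin k) (r s : Fin (n i)) (γ : G)
    (hs : gd.src γ = d.v i s) (hr : gd.rng γ = d.v i r) : Gi i :=
  (d.e i).symm ⟨gd.m (gd.inv (d.ga i r)) (gd.m γ (d.ga i s)),
    by
      have hγs : gd.src γ = gd.rng (d.ga i s) := hs.trans (d.rng_ga i s).symm
      have h1 : gd.src (gd.inv (d.ga i r)) = gd.rng (gd.m γ (d.ga i s)) := by
        rw [gd.src_inv, d.rng_ga, gd.rng_m _ _ hγs]; exact hr.symm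
      rw [gd.src_m _ _ h1, gd.src_m _ _ hγs, d.src_ga],
    by
      have hγs : gd.src γ = gd.rng (d.ga i s) := hs.trans (d.rng_ga i s).symm
      have h1 : gd.src (gd.inv (d.ga i r)) = gd.rng (gd.m γ (d.ga i s)) := by
        rw [gd.src_inv, d.rng_ga, gd.rng_m _ _ hγs]; exact hr.symm
      rw [gd.rng_m _ _ h1, gd.rng_inv, d.src_ga]⟩

lemma dec_congr (i : Fin k) (r s : Fin (n i)) {γ γ' : G} (h : γ = γ')
    (hs : gd.src γ = d.v i s) (hr : gd.rng γ = d.v i r)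
    (hs' : gd.src γ' = d.v i s) (hr' : gd.rng γ' = d.v i r) :
    d.dec i r s γ hs hr = d.dec i r s γ' hs' hr' := by subst h; rfl

lemma bmap_dec (i : Fin k) (r s : Fin (n i)) (γ : G)
    (hs : gd.src γ = d.v i s) (hr : gd.rng γ = d.v i r) :
    d.bmap ⟨i, (r, s), d.dec i r s γ hs hr⟩ = γ := by
  simp only [bmap, dec, Equiv.apply_symm_apply]
  have hγs : gd.src γ = gd.rng (d.ga i s) := hs.trans (d.rng_ga i s).symm
  have h1 : gd.src (gd.inv (d.ga i r)) = gd.rng (gd.m γ (d.ga i s)) := by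
    rw [gd.src_inv, d.rng_ga, gd.rng_m _ _ hγs]; exact hr.symm
  have h2 : gd.src (gd.m γ (d.ga i s)) = gd.rng (gd.inv (d.ga i s)) := by
    rw [gd.src_m _ _ hγs, gd.rng_inv]
  rw [gd.m_assoc (gd.inv (d.ga i r)) (gd.m γ (d.ga i s)) (gd.inv (d.ga i s)) h1 h2,
    gd.m_cancel3 γ (d.ga i s) hγs,
    gd.m_cancel2 (d.ga i r) γ ((d.rng_ga i r).trans hr.symm)]

lemma dec_bmap (i : Fin k) (r s : Fin (n i)) (x : Gi i)
    (hs : gd.src (d.bmap ⟨i, (r, s), x⟩) = d.v i s)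
    (hr : gd.rng (d.bmap ⟨i, (r, s), x⟩) = d.v i r) :
    d.dec i r s (d.bmap ⟨i, (r, s), x⟩) hs hr = x := by
  have key : gd.m (gd.inv (d.ga i r)) (gd.m (d.bmap ⟨i, (r, s), x⟩) (d.ga i s)) =
      ((d.e i x : _) : G) := by
    simp only [bmap]
    have hexs : gd.src ((d.e i x : _) : G) = gd.rng (gd.inv (d.ga i s)) := by
      rw [gd.rng_inv, d.src_ga]; exact d.src_e i x
    have hM : gd.src (d.ga i r) = gd.rng (gd.m ((d.e i x : _) : G) (gd.inv (d.ga i s))) := by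
      rw [gd.rng_m _ _ hexs, d.rng_e, d.src_ga]
    have hMs : gd.src (gd.m ((d.e i x : _) : G) (gd.inv (d.ga i s))) = gd.rng (d.ga i s) := by
      rw [gd.src_m _ _ hexs, gd.src_inv]
    rw [gd.m_assoc (d.ga i r) _ (d.ga i s) hM hMs,
      gd.m_cancel1 (d.ga i r) _ (by rw [gd.rng_m _ _ hMs]; exact hM),
      gd.m_cancel4 _ (d.ga i s) ((d.src_e i x).trans (d.src_ga i s).symm)]
  simp only [dec]
  rw [Equiv.symm_apply_eq]
  exact Subtype.ext key

lemma bmap_comp (i : Fin k) (r t s : Fin (n i)) (y z : Gi i)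
    (h : gd.src (d.bmap ⟨i, (r, t), y⟩) = gd.rng (d.bmap ⟨i, (t, s), z⟩)) :
    gd.comp (d.bmap ⟨i, (r, t), y⟩) (d.bmap ⟨i, (t, s), z⟩) h = d.bmap ⟨i, (r, s), y * z⟩ := by
  rw [← gd.m_def _ _ h]; exact d.bmap_m i r t s y z

lemma bmap_injective (hdisj : ∀ i j, i ≠ j → O i ∩ O j = ∅) :
    Function.Injective d.bmap := by
  rintro ⟨i, ⟨r, s⟩, x⟩ ⟨j, ⟨r', s'⟩, x'⟩ h
  have hsrc := congrArg gd.src h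
  rw [d.src_bmap, d.src_bmap] at hsrc
  have hij : i = j := by
    by_contra hne
    have h2 : d.v i s ∈ O j := by rw [hsrc]; exact d.v_mem j s'
    have := hdisj i j hne
    rw [Set.eq_empty_iff_forall_notMem] at this
    exact this _ ⟨d.v_mem i s, h2⟩
  subst hij
  have hs : s = s' := (d.idx i).symm.injective (Subtype.coe_injective hsrc)
  have hrng := congrArg gd.rng h
  rw [d.rng_bmap, d.rng_bmap] at hrng
  have hr : r = r' := (d.idx i).symm.injective (Subtype.coe_injective hrng)
  subst hs; subst hr
  have hx : x = x' := by
    have e1 := d.dec_bmap i r s x (d.src_bmap i r s x) (d.rng_bmap i r s x)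
    have e2 := d.dec_bmap i r s x' (d.src_bmap i r s x') (d.rng_bmap i r s x')
    rw [← e1, ← e2]
    exact d.dec_congr i r s h _ _ _ _
  rw [hx]

lemma bmap_surjective (hcover : (⋃ i, O i) = gd.units)
    (hinvt : ∀ i, ∀ γ : G, gd.src γ ∈ O i → gd.rng γ ∈ O i) :
    Function.Surjective d.bmap := by
  intro γ
  have hsrc_unit : gd.src γ ∈ gd.units := gd.src_src γ
  have hmem : gd.src γ ∈ ⋃ i, O i := by rw [hcover]; exact hsrc_unit
  obtain ⟨i, hi⟩ := Set.mem_iUnion.mp (by simpa using hmem)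
  have hrng : gd.rng γ ∈ O i := hinvt i γ hi
  have hs : gd.src γ = d.v i (d.idx i ⟨gd.src γ, hi⟩) := by
    simp [v, Equiv.symm_apply_apply]
  have hr : gd.rng γ = d.v i (d.idx i ⟨gd.rng γ, hrng⟩) := by
    simp [v, Equiv.symm_apply_apply]
  exact ⟨⟨i, (d.idx i ⟨gd.rng γ, hrng⟩, d.idx i ⟨gd.src γ, hi⟩),
      d.dec i _ _ γ hs hr⟩, d.bmap_dec i _ _ γ hs hr⟩

end OrbitData

end DiscGroupoid

/-- Let `S` be a commutative semiring and `G` a discrete groupoid with finite unit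
space, with orbits `O₁, …, O_k` of sizes `n₁, …, n_k` and isotropy groups
`G₁, …, G_k`.  The Steinberg algebra `A_S(G)` — the finitely supported functions
`G →₀ S` with convolution `mul` — is isomorphic, as an `S`-algebra, to the
product `∏ᵢ M_{nᵢ}(S Gᵢ)` of matrix algebras over the group algebras `S Gᵢ`. -/
theorem stmt18 {G : Type*} [DecidableEq G] (gd : DiscGroupoid G)
    (S : Type*) [CommSemiring S]
    (hfin : gd.units.Finite)
    (k : ℕ) (O : Fin k → Set G) (n : Fin k → ℕ)
    (Gi : Fin k → Type*) [∀ i, Group (Gi i)]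
    -- the `O i` are the orbits of the unit space:
    (hsub : ∀ i, O i ⊆ gd.units)
    (hdisj : ∀ i j, i ≠ j → O i ∩ O j = ∅)
    (hcover : (⋃ i, O i) = gd.units)
    (horb : ∀ i, ∀ u ∈ O i, ∀ v ∈ O i, ∃ γ : G, gd.src γ = u ∧ gd.rng γ = v)
    (hinvt : ∀ i, ∀ γ : G, gd.src γ ∈ O i → gd.rng γ ∈ O i)
    -- sizes and isotropy groups of the orbits:
    (hn : ∀ i, (O i).ncard = n i)
    (hiso : ∀ i, ∃ u ∈ O i,
      ∃ e : Gi i ≃ {γ : G // gd.src γ = u ∧ gd.rng γ = u},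
        ∀ g h : Gi i, ((e (g * h) : {γ : G // gd.src γ = u ∧ gd.rng γ = u}) : G) =
          gd.comp (e g : {γ : G // gd.src γ = u ∧ gd.rng γ = u})
            (e h : {γ : G // gd.src γ = u ∧ gd.rng γ = u})
            (((e g).2.1).trans (((e h).2.2).symm)))
    -- the convolution product of the Steinberg algebra:
    (mul : (G →₀ S) → (G →₀ S) → (G →₀ S))
    (hmul : ∀ (f g : G →₀ S) (γ : G),
      mul f g γ = ∑ p ∈ f.support ×ˢ g.support,
        if h : gd.src p.1 = gd.rng p.2 then
          (if gd.comp p.1 p.2 h = γ then f p.1 * g p.2 else 0)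
        else 0) :
    ∃ φ : (G →₀ S) ≃
        (∀ i : Fin k, Matrix (Fin (n i)) (Fin (n i)) (MonoidAlgebra S (Gi i))),
      (∀ f g : G →₀ S, φ (f + g) = φ f + φ g) ∧
      (∀ (s : S) (f : G →₀ S), φ (s • f) = s • φ f) ∧
      (∀ f g : G →₀ S, φ (mul f g) = φ f * φ g) := by
  classical
  choose u hu e he using hiso
  have hOfin : ∀ i, Finite (O i) := fun i => (hfin.subset (hsub i)).to_subtype
  have idx : ∀ i, (O i) ≃ Fin (n i) := fun i =>
    @Finite.equivFinOfCardEq _ (hOfin i) _ (by rw [Nat.card_coe_set_eq]; exact hn i)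
  choose arr ha1 ha2 using fun i (v : O i) => horb i (u i) (hu i) v v.2
  let d : gd.OrbitData O n Gi := ⟨u, hu, e, he, idx, arr, ha1, ha2⟩
  have hbij : Function.Bijective d.bmap :=
    ⟨d.bmap_injective hdisj, d.bmap_surjective hcover hinvt⟩
  let σ : (Σ i : Fin k, (Fin (n i) × Fin (n i)) × Gi i) ≃ G := Equiv.ofBijective d.bmap hbij
  let φ : (G →₀ S) ≃ (∀ i : Fin k, Matrix (Fin (n i)) (Fin (n i)) (MonoidAlgebra S (Gi i))) :=
    (Finsupp.equivCongrLeft σ.symm).trans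
      ((Finsupp.sigmaFinsuppEquivPiFinsupp).trans
        (Equiv.piCongrRight fun i =>
          (Finsupp.finsuppProdEquiv).trans
            ((Finsupp.equivFunOnFinite).trans ((Equiv.curry _ _ _).trans
              (Equiv.piCongrRight fun _ => Equiv.piCongrRight fun _ =>
                MonoidAlgebra.coeffEquiv.symm)))))
  have hφ : ∀ (f : G →₀ S) (i : Fin k) (r s : Fin (n i)) (x : Gi i),
      (φ f i r s).coeff x = f (d.bmap ⟨i, (r, s), x⟩) := by
    intro f i r s x
    rfl
  refine ⟨φ, ?_, ?_, ?_⟩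
  · intro f g
    funext i
    funext r s
    refine MonoidAlgebra.ext (Finsupp.ext fun x => ?_)
    have : ((φ f + φ g) i r s : MonoidAlgebra S (Gi i)).coeff x = (φ f i r s).coeff x + (φ g i r s).coeff x := rfl
    rw [this, hφ, hφ, hφ, Finsupp.add_apply]
  · intro c f
    funext i
    funext r s
    refine MonoidAlgebra.ext (Finsupp.ext fun x => ?_)
    have : ((c • φ f) i r s : MonoidAlgebra S (Gi i)).coeff x = c • (φ f i r s).coeff x := rfl
    rw [this, hφ, hφ, Finsupp.smul_apply]
  · intro f g
    funext i
    funext r s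
    refine MonoidAlgebra.ext (Finsupp.ext fun x => ?_)
    rw [hφ, hmul]
    have hmat : ((φ f * φ g) i r s : MonoidAlgebra S (Gi i)).coeff x
        = ∑ t : Fin (n i), ((φ f i r t * φ g i t s : MonoidAlgebra S (Gi i))).coeff x := by
      rw [show ((φ f * φ g) i r s : MonoidAlgebra S (Gi i))
          = (φ f i * φ g i) r s from rfl, Matrix.mul_apply]
      rw [MonoidAlgebra.coeff_sum]
      exact Finsupp.finset_sum_apply _ _ _
    have hma : ∀ t : Fin (n i), ((φ f i r t * φ g i t s : MonoidAlgebra S (Gi i))).coeff x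
        = ∑ y ∈ (φ f i r t).coeff.support, ∑ z ∈ (φ g i t s).coeff.support,
            if y * z = x then
              f (d.bmap ⟨i, (r, t), y⟩) * g (d.bmap ⟨i, (t, s), z⟩) else 0 := by
      intro t
      rw [MonoidAlgebra.coeff_mul]
      simp only [Finsupp.sum]
      exact Finset.sum_congr rfl fun y _ => Finset.sum_congr rfl fun z _ => by
        rw [hφ, hφ]
    rw [hmat]
    simp only [hma]
    have hterm : ∀ pq : G × G,
        (if h : gd.src pq.1 = gd.rng pq.2 then
           (if gd.comp pq.1 pq.2 h = d.bmap ⟨i, (r, s), x⟩ then f pq.1 * g pq.2 else 0)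
         else 0)
        = if (∃ h : gd.src pq.1 = gd.rng pq.2, gd.comp pq.1 pq.2 h = d.bmap ⟨i, (r, s), x⟩)
            then f pq.1 * g pq.2 else 0 := by
      intro pq
      by_cases h : gd.src pq.1 = gd.rng pq.2
      · rw [dif_pos h]
        by_cases h2 : gd.comp pq.1 pq.2 h = d.bmap ⟨i, (r, s), x⟩
        · rw [if_pos h2, if_pos ⟨h, h2⟩]
        · rw [if_neg h2, if_neg (by rintro ⟨h', hc⟩; exact h2 hc)]
      · rw [dif_neg h, if_neg (by rintro ⟨h', _⟩; exact h h')]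
    simp only [hterm]
    rw [← Finset.sum_filter]
    have hR : (∑ t : Fin (n i), ∑ y ∈ (φ f i r t).coeff.support, ∑ z ∈ (φ g i t s).coeff.support,
          if y * z = x then
            f (d.bmap ⟨i, (r, t), y⟩) * g (d.bmap ⟨i, (t, s), z⟩) else 0)
        = ∑ q ∈ (Finset.univ.sigma fun t : Fin (n i) =>
              (φ f i r t).coeff.support ×ˢ (φ g i t s).coeff.support).filter
              (fun q => q.2.1 * q.2.2 = x),
            f (d.bmap ⟨i, (r, q.1), q.2.1⟩) * g (d.bmap ⟨i, (q.1, s), q.2.2⟩) := by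
      rw [Finset.sum_filter, Finset.sum_sigma]
      exact Finset.sum_congr rfl fun t _ => by rw [Finset.sum_product]
    rw [hR]
    refine (Finset.sum_bij
      (fun q _ => ((d.bmap ⟨i, (r, q.1), q.2.1⟩ : G), (d.bmap ⟨i, (q.1, s), q.2.2⟩ : G)))
      ?_ ?_ ?_ ?_).symm
    · -- membership
      rintro ⟨t, y, z⟩ hq
      rw [Finset.mem_filter, Finset.mem_sigma, Finset.mem_product] at hq
      obtain ⟨⟨-, hy, hz⟩, hqx⟩ := hq
      rw [Finset.mem_filter, Finset.mem_product]
      refine ⟨⟨?_, ?_⟩, ?_, ?_⟩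
      · rw [Finsupp.mem_support_iff, ← hφ]
        exact Finsupp.mem_support_iff.mp hy
      · rw [Finsupp.mem_support_iff, ← hφ]
        exact Finsupp.mem_support_iff.mp hz
      · rw [d.src_bmap, d.rng_bmap]
      · rw [d.bmap_comp i r t s y z (by rw [d.src_bmap, d.rng_bmap]), hqx]
    · -- injectivity
      rintro ⟨t1, y1, z1⟩ h1 ⟨t2, y2, z2⟩ h2 heq
      rw [Prod.mk.injEq] at heq
      obtain ⟨e1, e2⟩ := heq
      have e1' := hbij.1 e1
      have e2' := hbij.1 e2
      simp only [Sigma.mk.inj_iff, heq_eq_eq, Prod.mk.injEq, true_and, and_true] at e1' e2'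
      obtain ⟨ht, hy⟩ := e1'
      obtain ⟨-, hz⟩ := e2'
      subst ht; subst hy; subst hz; rfl
    · -- surjectivity
      rintro ⟨p, q⟩ hpq
      rw [Finset.mem_filter, Finset.mem_product] at hpq
      obtain ⟨⟨hpf, hqg⟩, hsr, hcomp⟩ := hpq
      have h1 : gd.src q = d.v i s := by
        have := congrArg gd.src hcomp
        rw [gd.src_comp, d.src_bmap] at this
        exact this
      have h2 : gd.rng p = d.v i r := by
        have := congrArg gd.rng hcomp
        rw [gd.rng_comp, d.rng_bmap] at this
        exact this
      have hmem : gd.src q ∈ O i := by rw [h1]; exact d.v_mem i s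
      have hrmem : gd.rng q ∈ O i := hinvt i q hmem
      have h3 : gd.rng q = d.v i (d.idx i ⟨gd.rng q, hrmem⟩) := by
        simp [DiscGroupoid.OrbitData.v, Equiv.symm_apply_apply]
      set t : Fin (n i) := d.idx i ⟨gd.rng q, hrmem⟩ with hts
      have h4 : gd.src p = d.v i t := hsr.trans h3
      set y : Gi i := d.dec i r t p h4 h2 with hys
      set z : Gi i := d.dec i t s q h1 h3 with hzs
      have hby : d.bmap ⟨i, (r, t), y⟩ = p := d.bmap_dec i r t p h4 h2
      have hbz : d.bmap ⟨i, (t, s), z⟩ = q := d.bmap_dec i t s q h1 h3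
      have hc2 : gd.comp p q hsr = d.bmap ⟨i, (r, s), y * z⟩ :=
        (gd.comp_congr hby.symm hbz.symm hsr (by rw [d.src_bmap, d.rng_bmap])).trans
          (d.bmap_comp i r t s y z _)
      have hyzx : y * z = x := by
        have := hbij.1 (hc2.symm.trans hcomp)
        simp only [Sigma.mk.inj_iff, heq_eq_eq, Prod.mk.injEq, true_and, and_true] at this
        exact this
      refine ⟨⟨t, y, z⟩, ?_, ?_⟩
      · rw [Finset.mem_filter, Finset.mem_sigma, Finset.mem_product]
        refine ⟨⟨Finset.mem_univ t, ?_, ?_⟩, hyzx⟩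
        · rw [Finsupp.mem_support_iff, hφ, hby]
          exact Finsupp.mem_support_iff.mp hpf
        · rw [Finsupp.mem_support_iff, hφ, hbz]
          exact Finsupp.mem_support_iff.mp hqg
      · exact Prod.ext hby hbz
    · -- values
      rintro ⟨t, y, z⟩ hq
      rfl
end
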